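/- Let R ⊆ T be an inclusion of commutative ℂ-algebras such that R is a direct summand of T as an R-module. If T is a simple module over its ring of differential operators 𝒟(T), then R is a simple module over its ring of differential operators 𝒟(R). -/

import Mathlib

/-- Grothendieck differential operators of order ≤ n on a commutative `k`-algebra `R`:
order ≤ 0 means `R`-linear (i.e. multiplication by an element after evaluation at `1`), and
order ≤ n+1 means all commutators with multiplication operators have order ≤ n. -/
def IsDiffOp (k R : Type*) [CommSemiring k] [CommRing R] [Algebra k R] :
    ℕ → Module.End k R → Prop
  | 0 => fun D => ∀ r x : R, D (r * x) = r * D x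
  | n + 1 => fun D => ∀ r : R,
      IsDiffOp k R n (D * Algebra.lmul k R r - Algebra.lmul k R r * D)

/-- `R` is D-simple: `R` is a simple module over its ring of differential operators, i.e. the
only subspaces stable under all differential operators are `0` and `R`. -/
def DSimple (k R : Type*) [CommSemiring k] [CommRing R] [Algebra k R] : Prop :=
  Nontrivial R ∧ ∀ I : Submodule k R,
    (∀ (n : ℕ) (D : Module.End k R), IsDiffOp k R n D → ∀ x ∈ I, D x ∈ I) →
    I = ⊥ ∨ I = ⊤

/-!
If `I ⊆ R` is a nonzero `𝒟(R)`-stable subspace, the elements `t ∈ T` with `π (D t) ∈ I` for all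
`D ∈ 𝒟(T)` form a `𝒟(T)`-stable subspace of `T`, because `𝒟(T)` is closed under composition.
It contains the image of `I`, since `π ∘ D ∘ (R ↪ T)` is a differential operator on `R` whenever `D` is one
on `T` (the projection is `R`-linear, so it commutes with the commutators defining the order).
By `𝒟(T)`-simplicity it is all of `T`; taking `t = 1` and `D = id` gives `1 = π 1 ∈ I`, so `I = R`.
-/

namespace IsDiffOp

variable {k R : Type*} [CommSemiring k] [CommRing R] [Algebra k R]

theorem commutator_eq_zero {D : Module.End k R} (hD : IsDiffOp k R 0 D) (r : R) :
    D * Algebra.lmul k R r - Algebra.lmul k R r * D = 0 := by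
  ext x
  simp [hD r x]

theorem zero (n : ℕ) : IsDiffOp k R n 0 := by
  induction n with
  | zero => intro r x; simp
  | succ n ih => intro r; simpa using ih

theorem one : IsDiffOp k R 0 1 := fun _ _ => rfl

theorem lmul (r : R) : IsDiffOp k R 0 (Algebra.lmul k R r) := fun a x => by
  simp only [Algebra.coe_lmul_eq_mul, LinearMap.mul_apply']
  ring

theorem add {n : ℕ} {D E : Module.End k R} (hD : IsDiffOp k R n D) (hE : IsDiffOp k R n E) :
    IsDiffOp k R n (D + E) := by
  induction n generalizing D E with
  | zero => intro r x; simp only [LinearMap.add_apply, hD r x, hE r x, mul_add]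
  | succ n ih =>
    intro r
    rw [show (D + E) * Algebra.lmul k R r - Algebra.lmul k R r * (D + E)
      = (D * Algebra.lmul k R r - Algebra.lmul k R r * D)
        + (E * Algebra.lmul k R r - Algebra.lmul k R r * E) by noncomm_ring]
    exact ih (hD r) (hE r)

theorem mul {m n : ℕ} {D E : Module.End k R} (hD : IsDiffOp k R m D) (hE : IsDiffOp k R n E) :
    IsDiffOp k R (m + n) (D * E) := by
  have leibniz : ∀ (D E : Module.End k R) (r : R),
      D * E * Algebra.lmul k R r - Algebra.lmul k R r * (D * E)
        = D * (E * Algebra.lmul k R r - Algebra.lmul k R r * E)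
          + (D * Algebra.lmul k R r - Algebra.lmul k R r * D) * E := by
    intros
    simp only [mul_sub, sub_mul, mul_assoc]
    abel
  induction m generalizing n D E with
  | zero =>
    induction n generalizing E with
    | zero => intro r x; simp only [Module.End.mul_apply, hE r x, hD r (E x)]
    | succ n ih =>
      intro r
      rw [leibniz, hD.commutator_eq_zero, zero_mul, add_zero]
      exact ih (hE r)
  | succ m ihm =>
    induction n generalizing E with
    | zero =>
      intro r
      rw [leibniz, hE.commutator_eq_zero, mul_zero, zero_add]
      exact ihm (hD r) hE
    | succ n ihn =>
      intro r
      rw [leibniz]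
      refine (ihn (hE r)).add ?_
      rw [Nat.add_right_comm]
      exact ihm (hD r) hE

end IsDiffOp

section Stable

variable (k : Type*) {R : Type*} [CommSemiring k] [CommRing R] [Algebra k R]

def DStable (I : Submodule k R) : Prop :=
  ∀ (n : ℕ) (D : Module.End k R), IsDiffOp k R n D → ∀ x ∈ I, D x ∈ I

variable {k}

theorem DStable.eq_top_of_one_mem {I : Submodule k R} (hI : DStable k I) (h1 : (1 : R) ∈ I) :
    I = ⊤ :=
  Submodule.eq_top_iff'.2 fun r => by
    simpa using hI 0 (Algebra.lmul k R r) (IsDiffOp.lmul r) 1 h1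

theorem DSimple.eq_top_of_mem {I : Submodule k R} (hR : DSimple k R) (hI : DStable k I) {x : R}
    (hx : x ∈ I) (hx0 : x ≠ 0) : I = ⊤ :=
  (hR.2 I hI).resolve_left fun hbot => hx0 (by simpa [hbot] using hx)

variable {M : Type*} [AddCommGroup M] [Module k M]

/-- The largest `𝒟(R)`-stable subspace of `R` that `f` maps into `I`. -/
def diffComap (f : R →ₗ[k] M) (I : Submodule k M) : Submodule k R :=
  ⨅ (n : ℕ) (D : Module.End k R) (_ : IsDiffOp k R n D), I.comap (f ∘ₗ D)

theorem mem_diffComap {f : R →ₗ[k] M} {I : Submodule k M} {t : R} :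
    t ∈ diffComap f I ↔ ∀ (n : ℕ) (D : Module.End k R), IsDiffOp k R n D → f (D t) ∈ I := by
  simp [diffComap]

theorem dStable_diffComap (f : R →ₗ[k] M) (I : Submodule k M) : DStable k (diffComap f I) :=
  fun _ _ hD _ ht => mem_diffComap.2 fun _ _ hE => mem_diffComap.1 ht _ _ (hE.mul hD)

end Stable

section Pullback

variable {k R T : Type*} [CommSemiring k] [CommRing R] [CommRing T] [Algebra k R] [Algebra k T]
  [Algebra R T] [IsScalarTower k R T] (π : T →ₗ[R] R)

def pullbackOp (D : Module.End k T) : Module.End k R :=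
  π.restrictScalars k ∘ₗ D ∘ₗ (Algebra.linearMap R T).restrictScalars k

@[simp]
theorem pullbackOp_apply (D : Module.End k T) (r : R) :
    pullbackOp π D r = π (D (algebraMap R T r)) := rfl

theorem IsDiffOp.pullbackOp {n : ℕ} {D : Module.End k T} (hD : IsDiffOp k T n D) :
    IsDiffOp k R n (pullbackOp π D) := by
  have π_mul : ∀ (r : R) (t : T), π (algebraMap R T r * t) = r * π t := fun r t => by
    rw [← Algebra.smul_def, map_smul, smul_eq_mul]
  induction n generalizing D with
  | zero =>
    intro r x
    simp only [pullbackOp_apply, map_mul, hD (algebraMap R T r) (algebraMap R T x), π_mul]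
  | succ n ih =>
    intro r
    convert ih (hD (algebraMap R T r)) using 1
    ext x
    simp only [Module.End.mul_apply, LinearMap.sub_apply, pullbackOp_apply,
      Algebra.coe_lmul_eq_mul, LinearMap.mul_apply', map_sub, map_mul, π_mul]

theorem DStable.algebraMap_mem_diffComap {I : Submodule k R} (hI : DStable k I) {x : R}
    (hx : x ∈ I) : algebraMap R T x ∈ diffComap (π.restrictScalars k) I :=
  mem_diffComap.2 fun _ _ hD => hI _ _ (hD.pullbackOp π) x hx

end Pullback

theorem stmt_8_general {R T : Type*} [CommRing R] [CommRing T] [Algebra ℂ R] [Algebra ℂ T]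
    [Algebra R T] [IsScalarTower ℂ R T]
    (π : T →ₗ[R] R) (hπ : ∀ r : R, π (algebraMap R T r) = r)
    (hT : DSimple ℂ T) : DSimple ℂ R := by
  have : Nontrivial T := hT.1
  have hinj : Function.Injective (algebraMap R T) := Function.LeftInverse.injective hπ
  refine ⟨(algebraMap R T).domain_nontrivial, fun I hI => or_iff_not_imp_left.2 fun hbot => ?_⟩
  obtain ⟨x, hxI, hx0⟩ := (Submodule.ne_bot_iff I).1 hbot
  have hK : diffComap (π.restrictScalars ℂ) I = ⊤ :=
    hT.eq_top_of_mem (dStable_diffComap _ _) (DStable.algebraMap_mem_diffComap π hI hxI)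
      ((map_ne_zero_iff _ hinj).2 hx0)
  have h1 : π 1 ∈ I :=
    mem_diffComap.1 (hK ▸ Submodule.mem_top : (1 : T) ∈ _) 0 1 IsDiffOp.one
  rw [← map_one (algebraMap R T), hπ] at h1
  exact DStable.eq_top_of_one_mem hI h1

/-- Smith's descent: Let `R ⊆ T` be commutative ℂ-algebras such that `R` is a
direct summand of `T` as an `R`-module (there is an `R`-linear projection `π : T → R` restricting
to the identity on `R`).  If `T` is a simple module over its ring of differential operators,
then so is `R`. -/
theorem stmt_8 {R T : Type*} [CommRing R] [CommRing T] [Algebra ℂ R] [Algebra ℂ T]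
    [Algebra R T] [IsScalarTower ℂ R T]
    (hinj : Function.Injective (algebraMap R T))
    (π : T →ₗ[R] R) (hπ : ∀ r : R, π (algebraMap R T r) = r)
    (hT : DSimple ℂ T) : DSimple ℂ R :=
  stmt_8_general π hπ hT
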